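/- Let n ≥ 4 and let a, b ∈ A_n be doubly pure with ‖a‖ = ‖b‖ = 1, with b ∈ H_a^⊥, and suppose (a,a,b) = 0 and (a,b,b) = 0. Then the real-linear map from the quaternions ℍ to A_n determined by 1 ↦ e_0, i ↦ a, j ↦ b, k ↦ a·b is an injective ℝ-algebra homomorphism; in particular the linear span of {e_0, a, b, a·b} is a subalgebra of A_n isomorphic to ℍ. -/

import Mathlib

noncomputable section

open scoped Quaternion

/-- The Cayley–Dickson algebra `A n = ℝ^(2^n)` as a type. -/
def CD : ℕ → Type
  | 0 => ℝ
  | n + 1 => CD n × CD n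

namespace CD

instance instAddCommGroup : (n : ℕ) → AddCommGroup (CD n)
  | 0 => inferInstanceAs (AddCommGroup ℝ)
  | n + 1 =>
    letI := instAddCommGroup n
    inferInstanceAs (AddCommGroup (CD n × CD n))

instance instModule : (n : ℕ) → Module ℝ (CD n)
  | 0 => inferInstanceAs (Module ℝ ℝ)
  | n + 1 =>
    letI := instModule n
    inferInstanceAs (Module ℝ (CD n × CD n))

/-- Conjugation in the Cayley–Dickson algebra. -/
def conj : {n : ℕ} → CD n → CD n
  | 0, x => x
  | _ + 1, x => (conj x.1, -x.2)

/-- Cayley–Dickson multiplication. -/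
def mul : {n : ℕ} → CD n → CD n → CD n
  | 0, x, y => Mul.mul (α := ℝ) x y
  | _ + 1, x, y =>
    (mul x.1 y.1 - mul (conj y.2) x.2, mul y.2 x.1 + mul x.2 (conj y.1))

instance instMul (n : ℕ) : Mul (CD n) := ⟨mul⟩

/-- The multiplicative unit `e₀`. -/
def one : {n : ℕ} → CD n
  | 0 => (1 : ℝ)
  | _ + 1 => (one, 0)

instance instOne (n : ℕ) : One (CD n) := ⟨one⟩

/-- The Euclidean inner product on `A n = ℝ^(2^n)`. -/
def inner : {n : ℕ} → CD n → CD n → ℝ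
  | 0, x, y => (x * y : ℝ)
  | _ + 1, x, y => inner x.1 y.1 + inner x.2 y.2

/-- The Euclidean norm on `A n = ℝ^(2^n)`. -/
def norm {n : ℕ} (x : CD n) : ℝ := Real.sqrt (inner x x)

/-- `ã = (-a₂, a₁)`. -/
def tilde {n : ℕ} (a : CD (n + 1)) : CD (n + 1) := (-a.2, a.1)

/-- `ẽ₀ = (0, e₀)`. -/
def etilde (n : ℕ) : CD (n + 1) := ((0 : CD n), (1 : CD n))

/-- An element is pure if its conjugate is its negative. -/
def IsPure {n : ℕ} (a : CD n) : Prop := conj a = -a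

/-- An element of `A (n+1)` is doubly pure if both of its coordinates are pure. -/
def IsDoublyPure {n : ℕ} (a : CD (n + 1)) : Prop := IsPure a.1 ∧ IsPure a.2

/-- The associator `(a,b,c) = (ab)c - a(bc)`. -/
def assoc {n : ℕ} (a b c : CD n) : CD n := a * b * c - a * (b * c)

/-- An element is alternative if `(a,a,x) = 0` for all `x`. -/
def IsAlternative {n : ℕ} (a : CD n) : Prop := ∀ x : CD n, assoc a a x = 0

/-- An element is strongly alternative if `(a,a,x) = 0` and `(a,x,x) = 0` for all `x`. -/
def IsStronglyAlternative {n : ℕ} (a : CD n) : Prop :=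
  (∀ x : CD n, assoc a a x = 0) ∧ (∀ x : CD n, assoc a x x = 0)

/-- The pure (imaginary) part of an element. -/
def im {n : ℕ} (a : CD n) : CD n := (2⁻¹ : ℝ) • (a - conj a)

/-- `H a`, the span of `{e₀, ã, a, ẽ₀}`. -/
def H {n : ℕ} (a : CD (n + 1)) : Submodule ℝ (CD (n + 1)) :=
  Submodule.span ℝ {(1 : CD (n + 1)), tilde a, a, etilde n}

/-- The orthogonal complement of `H a`. -/
def Hperp {n : ℕ} (a : CD (n + 1)) : Set (CD (n + 1)) :=
  {x | ∀ y ∈ H a, inner y x = 0}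

end CD

/-! The hypotheses make `a`, `b` and `a * b` behave like `i`, `j`, `k`: purity and norm one give
`a² = b² = -1`, orthogonality gives `b a = -(a b)`, and the two vanishing associators together
with their conjugates give the remaining products, except `(a b)² = -1`, which follows from the
associativity of the trace form `re ((x y) z) = re (x (y z))` of every Cayley–Dickson algebra.
So the linear map `ℍ → A_n` prescribed by the statement respects the multiplication table of
`1, i, j, k`, hence is multiplicative, and it is injective because `φ (star q) * φ q = ‖q‖² • 1`. -/

namespace CD

variable {n : ℕ}

theorem ext {x y : CD (n + 1)} (h₁ : x.1 = y.1) (h₂ : x.2 = y.2) : x = y := Prod.ext h₁ h₂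

@[simp] theorem fst_add (x y : CD (n + 1)) : (x + y).1 = x.1 + y.1 := rfl
@[simp] theorem snd_add (x y : CD (n + 1)) : (x + y).2 = x.2 + y.2 := rfl
@[simp] theorem fst_smul (r : ℝ) (x : CD (n + 1)) : (r • x).1 = r • x.1 := rfl
@[simp] theorem snd_smul (r : ℝ) (x : CD (n + 1)) : (r • x).2 = r • x.2 := rfl
@[simp] theorem fst_one : (1 : CD (n + 1)).1 = 1 := rfl
@[simp] theorem snd_one : (1 : CD (n + 1)).2 = 0 := rfl
@[simp] theorem fst_conj (x : CD (n + 1)) : (conj x).1 = conj x.1 := rfl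
@[simp] theorem snd_conj (x : CD (n + 1)) : (conj x).2 = -x.2 := rfl
@[simp] theorem fst_mul (x y : CD (n + 1)) : (x * y).1 = x.1 * y.1 - conj y.2 * x.2 := rfl
@[simp] theorem snd_mul (x y : CD (n + 1)) : (x * y).2 = y.2 * x.1 + x.2 * conj y.1 := rfl
theorem inner_succ (x y : CD (n + 1)) : inner x y = inner x.1 y.1 + inner x.2 y.2 := rfl

theorem conj_zero : ∀ {n : ℕ}, conj (0 : CD n) = 0
  | 0 => rfl
  | _ + 1 => ext conj_zero neg_zero

theorem conj_one : ∀ {n : ℕ}, conj (1 : CD n) = 1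
  | 0 => rfl
  | _ + 1 => ext conj_one neg_zero

theorem conj_add : ∀ {n : ℕ} (x y : CD n), conj (x + y) = conj x + conj y
  | 0, _, _ => rfl
  | _ + 1, x, y => ext (conj_add x.1 y.1) (neg_add x.2 y.2)

theorem conj_neg : ∀ {n : ℕ} (x : CD n), conj (-x) = -conj x
  | 0, _ => rfl
  | _ + 1, x => ext (conj_neg x.1) rfl

theorem conj_sub (x y : CD n) : conj (x - y) = conj x - conj y := by
  rw [sub_eq_add_neg, conj_add, conj_neg, sub_eq_add_neg]

theorem conj_smul : ∀ {n : ℕ} (r : ℝ) (x : CD n), conj (r • x) = r • conj x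
  | 0, _, _ => rfl
  | _ + 1, r, x => ext (conj_smul r x.1) (smul_neg r x.2).symm

@[simp] theorem conj_conj : ∀ {n : ℕ} (x : CD n), conj (conj x) = x
  | 0, _ => rfl
  | _ + 1, x => ext (conj_conj x.1) (neg_neg x.2)

theorem mul_add_and_add_mul : ∀ {n : ℕ}, (∀ x y z : CD n, x * (y + z) = x * y + x * z) ∧
    ∀ x y z : CD n, (x + y) * z = x * z + y * z
  | 0 => ⟨_root_.mul_add (R := ℝ), _root_.add_mul (R := ℝ)⟩
  | n + 1 => by
    obtain ⟨mul_add, add_mul⟩ := mul_add_and_add_mul (n := n)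
    refine ⟨fun x y z => ext ?_ ?_, fun x y z => ext ?_ ?_⟩ <;>
      simp only [fst_mul, snd_mul, fst_add, snd_add, conj_add, mul_add, add_mul] <;> abel

protected theorem mul_add (x y z : CD n) : x * (y + z) = x * y + x * z :=
  mul_add_and_add_mul.1 x y z

protected theorem add_mul (x y z : CD n) : (x + y) * z = x * z + y * z :=
  mul_add_and_add_mul.2 x y z

protected theorem zero_mul (x : CD n) : 0 * x = 0 := by
  have h := CD.add_mul 0 0 x
  rwa [add_zero, left_eq_add] at h

protected theorem mul_zero (x : CD n) : x * 0 = 0 := by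
  have h := CD.mul_add x 0 0
  rwa [add_zero, left_eq_add] at h

protected theorem mul_one : ∀ {n : ℕ} (x : CD n), x * 1 = x
  | 0, x => _root_.mul_one (M := ℝ) x
  | _ + 1, x => ext
    (by simp only [fst_mul, fst_one, snd_one, CD.mul_one x.1, conj_zero, CD.zero_mul, sub_zero])
    (by simp only [snd_mul, fst_one, snd_one, conj_one, CD.mul_one x.2, CD.zero_mul, zero_add])

protected theorem one_mul : ∀ {n : ℕ} (x : CD n), 1 * x = x
  | 0, x => _root_.one_mul (M := ℝ) x
  | _ + 1, x => ext
    (by simp only [fst_mul, fst_one, snd_one, CD.one_mul x.1, CD.mul_zero, sub_zero])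
    (by simp only [snd_mul, fst_one, snd_one, CD.mul_one x.2, CD.zero_mul, add_zero])

-- Scoped, so that outside `CD` the operations on `CD n` still elaborate to the primitive instances.
scoped instance instNonAssocRing (n : ℕ) : NonAssocRing (CD n) where
  __ := instAddCommGroup n
  mul := (· * ·)
  one := 1
  left_distrib := CD.mul_add
  right_distrib := CD.add_mul
  zero_mul := CD.zero_mul
  mul_zero := CD.mul_zero
  one_mul := CD.one_mul
  mul_one := CD.mul_one

theorem smul_mul_assoc_and_mul_smul_comm : ∀ {n : ℕ},
    (∀ (r : ℝ) (x y : CD n), (r • x) * y = r • (x * y)) ∧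
    ∀ (r : ℝ) (x y : CD n), x * (r • y) = r • (x * y)
  | 0 => ⟨_root_.mul_assoc (G := ℝ), fun r x y => _root_.mul_left_comm (G := ℝ) x r y⟩
  | n + 1 => by
    obtain ⟨smul_mul_assoc, mul_smul_comm⟩ := smul_mul_assoc_and_mul_smul_comm (n := n)
    refine ⟨fun r x y => ext ?_ ?_, fun r x y => ext ?_ ?_⟩ <;>
      simp only [fst_mul, snd_mul, fst_smul, snd_smul, conj_smul, smul_mul_assoc, mul_smul_comm,
        smul_sub, smul_add]

scoped instance (n : ℕ) : IsScalarTower ℝ (CD n) (CD n) := ⟨smul_mul_assoc_and_mul_smul_comm.1⟩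

scoped instance (n : ℕ) : SMulCommClass ℝ (CD n) (CD n) :=
  ⟨fun r x y => (smul_mul_assoc_and_mul_smul_comm.2 r x y).symm⟩

theorem conj_mul : ∀ {n : ℕ} (x y : CD n), conj (x * y) = conj y * conj x
  | 0, x, y => mul_comm (G := ℝ) x y
  | _ + 1, x, y => ext
    (by simp only [fst_mul, fst_conj, snd_conj, conj_sub, conj_mul x.1 y.1, conj_mul (conj y.2) x.2,
      conj_conj, conj_neg, neg_mul, mul_neg, neg_neg])
    (by simp only [snd_mul, fst_conj, snd_conj, conj_conj, neg_mul]; abel)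

theorem inner_comm : ∀ {n : ℕ} (x y : CD n), inner x y = inner y x
  | 0, x, y => mul_comm (G := ℝ) x y
  | _ + 1, x, y => by rw [inner_succ, inner_succ, inner_comm x.1, inner_comm x.2]

theorem inner_add_right : ∀ {n : ℕ} (x y z : CD n), inner x (y + z) = inner x y + inner x z
  | 0, x, y, z => _root_.mul_add (R := ℝ) x y z
  | _ + 1, x, y, z => by
    simp only [inner_succ, fst_add, snd_add, inner_add_right x.1, inner_add_right x.2]
    ring

theorem inner_smul_right : ∀ {n : ℕ} (r : ℝ) (x y : CD n), inner x (r • y) = r * inner x y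
  | 0, r, x, y => mul_left_comm (G := ℝ) x r y
  | _ + 1, r, x, y => by
    simp only [inner_succ, fst_smul, snd_smul, inner_smul_right r x.1, inner_smul_right r x.2]
    ring

theorem inner_zero_right (x : CD n) : inner x 0 = 0 := by
  simpa using inner_smul_right 0 x 0

theorem inner_neg_right (x y : CD n) : inner x (-y) = -inner x y := by
  simpa using inner_smul_right (-1) x y

theorem inner_conj : ∀ {n : ℕ} (x y : CD n), inner (conj x) (conj y) = inner x y
  | 0, _, _ => rfl
  | _ + 1, x, y => by
    rw [inner_succ, inner_succ, fst_conj, fst_conj, snd_conj, snd_conj, inner_conj,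
      inner_neg_right, inner_comm (-x.2), inner_neg_right, neg_neg, inner_comm y.2]

theorem inner_one_one : ∀ {n : ℕ}, inner (1 : CD n) 1 = 1
  | 0 => _root_.mul_one (M := ℝ) 1
  | _ + 1 => by rw [inner_succ, fst_one, snd_one, inner_one_one, inner_zero_right, add_zero]

theorem mul_conj_add_mul_conj : ∀ {n : ℕ} (x y : CD n),
    x * conj y + y * conj x = (2 * inner x y) • (1 : CD n)
  | 0, x, y => (by intros; ring : ∀ u v : ℝ, u * v + v * u = 2 * (u * v) * 1) x y
  | _ + 1, x, y => by
    have h₁ := mul_conj_add_mul_conj x.1 y.1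
    have h₂ := mul_conj_add_mul_conj (conj y.2) (conj x.2)
    rw [conj_conj, conj_conj, inner_conj, inner_comm] at h₂
    refine ext ?_ ?_
    · simp only [fst_add, fst_mul, fst_conj, snd_conj, fst_smul, fst_one, conj_neg, neg_mul,
        inner_succ, mul_add, add_smul, ← h₁, ← h₂]
      abel
    · simp only [snd_add, snd_mul, fst_conj, snd_conj, snd_smul, snd_one, conj_conj, neg_mul,
        smul_zero]
      abel

theorem mul_conj_self (x : CD n) : x * conj x = inner x x • (1 : CD n) := by
  have h := mul_conj_add_mul_conj x x
  rw [← two_smul ℝ, mul_smul] at h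
  exact smul_right_injective _ two_ne_zero h

def re (x : CD n) : ℝ := inner 1 x

theorem re_one : re (1 : CD n) = 1 := inner_one_one

theorem re_zero : re (0 : CD n) = 0 := inner_zero_right 1

theorem re_add (x y : CD n) : re (x + y) = re x + re y := inner_add_right 1 x y

theorem re_neg (x : CD n) : re (-x) = -re x := inner_neg_right 1 x

theorem re_sub (x y : CD n) : re (x - y) = re x - re y := by
  rw [sub_eq_add_neg, re_add, re_neg, sub_eq_add_neg]

theorem re_smul_one (r : ℝ) : re (r • (1 : CD n)) = r := by
  rw [re, inner_smul_right, inner_one_one, mul_one]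

theorem re_conj (x : CD n) : re (conj x) = re x := by
  rw [re, ← conj_one, inner_conj, re]

theorem re_succ (x : CD (n + 1)) : re x = re x.1 := by
  rw [re, inner_succ, snd_one, inner_comm 0, inner_zero_right, add_zero, fst_one, re]

theorem re_mul_conj (x y : CD n) : re (x * conj y) = inner x y := by
  have h := congrArg re (mul_conj_add_mul_conj x y)
  rw [re_add, re_smul_one, ← re_conj (y * conj x), conj_mul, conj_conj] at h
  linarith

theorem re_mul_comm (x y : CD n) : re (x * y) = re (y * x) := by
  have h₁ : re (x * y) = inner x (conj y) := by rw [← re_mul_conj, conj_conj]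
  have h₂ : re (y * x) = inner y (conj x) := by rw [← re_mul_conj, conj_conj]
  rw [h₁, h₂, ← inner_conj, conj_conj, inner_comm]

theorem re_mul_assoc : ∀ {n : ℕ} (x y z : CD n), re (x * y * z) = re (x * (y * z))
  | 0, x, y, z => congrArg re (mul_assoc (G := ℝ) x y z)
  | n + 1, x, y, z => by
    have cyclic (u v w : CD n) : re (u * v * w) = re (w * u * v) := by
      rw [re_mul_assoc u v w, re_mul_comm u, re_mul_assoc v w u, re_mul_comm v]
    have e₁ := cyclic (conj y.2) x.2 z.1
    have e₂ : re (conj z.2 * (y.2 * x.1)) = re (x.1 * (conj z.2 * y.2)) := by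
      rw [re_mul_comm (conj z.2), cyclic, re_mul_comm _ x.1]
    have e₃ : re (conj z.2 * (x.2 * conj y.1)) = re (conj y.1 * conj z.2 * x.2) := by
      rw [re_mul_comm (conj z.2), ← cyclic]
    rw [re_succ, re_succ]
    simp only [fst_mul, snd_mul, sub_mul, mul_sub, add_mul, mul_add, conj_add, conj_mul, conj_conj,
      re_sub, re_add]
    linarith [re_mul_assoc x.1 y.1 z.1]

scoped instance (n : ℕ) : Nontrivial (CD n) :=
  ⟨⟨1, 0, fun h => by simpa [h, re_zero] using re_one (n := n)⟩⟩

theorem IsDoublyPure.isPure {x : CD (n + 1)} (h : IsDoublyPure x) : IsPure x := ext h.1 rfl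

theorem IsPure.mul_self {x : CD n} (hx : IsPure x) : x * x = -(inner x x • 1) := by
  rw [← mul_conj_self, hx, mul_neg, neg_neg]

theorem IsPure.mul_comm_of_inner_eq_zero {x y : CD n} (hx : IsPure x) (hy : IsPure y)
    (h : inner x y = 0) : y * x = -(x * y) := by
  have := mul_conj_add_mul_conj x y
  rw [hx, hy, h, mul_zero, zero_smul, mul_neg, mul_neg, ← neg_add, neg_eq_zero] at this
  exact eq_neg_of_add_eq_zero_right this

theorem IsPure.mul_of_inner_eq_zero {x y : CD n} (hx : IsPure x) (hy : IsPure y)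
    (h : inner x y = 0) : IsPure (x * y) := by
  rw [IsPure, conj_mul, hx, hy, neg_mul_neg, hx.mul_comm_of_inner_eq_zero hy h]

end CD

section QuaternionMap

variable {A : Type*} [NonAssocRing A]

structure IsQuaternionPair (i j : A) : Prop where
  i_mul_i : i * i = -1
  j_mul_j : j * j = -1
  j_mul_i : j * i = -(i * j)
  i_mul_k : i * (i * j) = -j
  k_mul_i : i * j * i = j
  j_mul_k : j * (i * j) = i
  k_mul_j : i * j * j = -i
  k_mul_k : i * j * (i * j) = -1

variable [Module ℝ A]

def quaternionMap (i j : A) : ℍ →ₗ[ℝ] A where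
  toFun q := q.re • 1 + q.imI • i + q.imJ • j + q.imK • (i * j)
  map_add' p q := by
    simp only [Quaternion.re_add, Quaternion.imI_add, Quaternion.imJ_add, Quaternion.imK_add,
      add_smul]
    abel
  map_smul' r q := by
    simp only [Quaternion.re_smul, Quaternion.imI_smul, Quaternion.imJ_smul, Quaternion.imK_smul,
      smul_eq_mul, mul_smul, smul_add, RingHom.id_apply]

theorem quaternionMap_coe (i j : A) (r : ℝ) : quaternionMap i j r = r • 1 := by
  simp [quaternionMap]

theorem range_quaternionMap (i j : A) :
    LinearMap.range (quaternionMap i j) = Submodule.span ℝ {1, i, j, i * j} := by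
  apply le_antisymm
  · rintro _ ⟨q, rfl⟩
    have mem {x : A} (hx : x ∈ ({1, i, j, i * j} : Set A)) (r : ℝ) :
        r • x ∈ Submodule.span ℝ {1, i, j, i * j} :=
      Submodule.smul_mem _ r (Submodule.subset_span hx)
    exact add_mem (add_mem (add_mem (mem (by simp) _) (mem (by simp) _)) (mem (by simp) _))
      (mem (by simp) _)
  · rw [Submodule.span_le]
    rintro _ (rfl | rfl | rfl | rfl)
    exacts [⟨1, by simp [quaternionMap]⟩, ⟨⟨0, 1, 0, 0⟩, by simp [quaternionMap]⟩,
      ⟨⟨0, 0, 1, 0⟩, by simp [quaternionMap]⟩, ⟨⟨0, 0, 0, 1⟩, by simp [quaternionMap]⟩]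

variable [IsScalarTower ℝ A A] [SMulCommClass ℝ A A] {i j : A}

theorem IsQuaternionPair.quaternionMap_mul (h : IsQuaternionPair i j) (p q : ℍ) :
    quaternionMap i j (p * q) = quaternionMap i j p * quaternionMap i j q := by
  simp only [quaternionMap, LinearMap.coe_mk, AddHom.coe_mk, Quaternion.re_mul,
    Quaternion.imI_mul, Quaternion.imJ_mul, Quaternion.imK_mul, add_mul, mul_add, smul_mul_assoc,
    mul_smul_comm, one_mul, mul_one, h.i_mul_i, h.j_mul_j, h.j_mul_i, h.i_mul_k, h.k_mul_i,
    h.j_mul_k, h.k_mul_j, h.k_mul_k]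
  module

theorem IsQuaternionPair.quaternionMap_injective [Nontrivial A] (h : IsQuaternionPair i j) :
    Function.Injective (quaternionMap i j) := by
  refine (injective_iff_map_eq_zero _).mpr fun q hq => ?_
  have : Quaternion.normSq q • (1 : A) = 0 := by
    rw [← quaternionMap_coe i j, ← Quaternion.star_mul_self, h.quaternionMap_mul, hq, mul_zero]
  exact Quaternion.normSq_eq_zero.mp ((smul_eq_zero.mp this).resolve_right one_ne_zero)

end QuaternionMap

namespace CD

theorem isQuaternionPair_of_assoc_eq_zero {n : ℕ} {a b : CD n} (ha : IsPure a) (hb : IsPure b)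
    (hna : inner a a = 1) (hnb : inner b b = 1) (hab : inner a b = 0)
    (h₁ : assoc a a b = 0) (h₂ : assoc a b b = 0) : IsQuaternionPair a b := by
  have haa : a * a = -1 := by rw [ha.mul_self, hna, one_smul]
  have hbb : b * b = -1 := by rw [hb.mul_self, hnb, one_smul]
  have hba : b * a = -(a * b) := ha.mul_comm_of_inner_eq_zero hb hab
  have haab : a * a * b = a * (a * b) := sub_eq_zero.mp h₁
  have habb : a * b * b = a * (b * b) := sub_eq_zero.mp h₂
  have hca : conj a = -a := ha
  have hcb : conj b = -b := hb
  -- conjugating the two associator identities gives their mirror images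
  have hbaa : b * a * a = b * (a * a) := by
    simpa [conj_mul, hca, hcb] using (congrArg conj haab).symm
  have hbba : b * (b * a) = b * b * a := by
    simpa [conj_mul, hca, hcb] using congrArg conj habb
  have hkj : a * b * b = -a := by rw [habb, hbb, mul_neg, mul_one]
  have hk : IsPure (a * b) := ha.mul_of_inner_eq_zero hb hab
  have hnk : inner (a * b) (a * b) = 1 := by
    rw [← re_mul_conj, hk, ← hba, ← re_mul_assoc, hkj, neg_mul, haa, neg_neg, re_one]
  exact
    { i_mul_i := haa
      j_mul_j := hbb
      j_mul_i := hba
      i_mul_k := by rw [← haab, haa, neg_mul, one_mul]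
      k_mul_i := by rw [← neg_neg (a * b), ← hba, neg_mul, hbaa, haa, mul_neg, mul_one, neg_neg]
      j_mul_k := by rw [← neg_neg (a * b), ← hba, mul_neg, hbba, hbb, neg_mul, one_mul, neg_neg]
      k_mul_j := hkj
      k_mul_k := by rw [hk.mul_self, hnk, one_smul] }

end CD

theorem quaternion_embedding_of_strongly_alternate_general (n : ℕ)
    (a b : CD (n + 1)) (ha : CD.IsDoublyPure a) (hb : CD.IsDoublyPure b)
    (hna : CD.norm a = 1) (hnb : CD.norm b = 1) (hperp : b ∈ CD.Hperp a)
    (h1 : CD.assoc a a b = 0) (h2 : CD.assoc a b b = 0) :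
    ∃ φ : ℍ → CD (n + 1),
      (∀ q : ℍ, φ q =
        q.re • (1 : CD (n + 1)) + q.imI • a + q.imJ • b + q.imK • (a * b)) ∧
      Function.Injective φ ∧
      φ 1 = 1 ∧
      (∀ p q : ℍ, φ (p * q) = φ p * φ q) ∧
      (∀ p q : ℍ, φ (p + q) = φ p + φ q) ∧
      (∀ (r : ℝ) (p : ℍ), φ (r • p) = r • φ p) ∧
      Set.range φ =
        (Submodule.span ℝ
          ({(1 : CD (n + 1)), a, b, a * b} : Set (CD (n + 1))) : Set (CD (n + 1))) := by
  open scoped CD in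
  have hab : CD.inner a b = 0 := hperp a (Submodule.subset_span (by simp))
  have h := CD.isQuaternionPair_of_assoc_eq_zero ha.isPure hb.isPure (Real.sqrt_eq_one.mp hna)
    (Real.sqrt_eq_one.mp hnb) hab h1 h2
  refine ⟨quaternionMap a b, fun q => rfl, h.quaternionMap_injective, ?_, h.quaternionMap_mul,
    map_add _, map_smul _, ?_⟩
  · simpa using quaternionMap_coe a b 1
  · rw [← LinearMap.coe_range, range_quaternionMap]

/-- For `n ≥ 4`, doubly pure `a, b` of norm one with `b ∈ H a ^ ⊥`,
`(a,a,b) = 0` and `(a,b,b) = 0`, the real-linear map `ℍ → A n` with `1 ↦ e₀`,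
`i ↦ a`, `j ↦ b`, `k ↦ a·b` is an injective ℝ-algebra homomorphism, and its image
is the span of `{e₀, a, b, a·b}`, a subalgebra isomorphic to `ℍ`. -/
theorem quaternion_embedding_of_strongly_alternate (n : ℕ) (hn : 4 ≤ n + 1)
    (a b : CD (n + 1)) (ha : CD.IsDoublyPure a) (hb : CD.IsDoublyPure b)
    (hna : CD.norm a = 1) (hnb : CD.norm b = 1) (hperp : b ∈ CD.Hperp a)
    (h1 : CD.assoc a a b = 0) (h2 : CD.assoc a b b = 0) :
    ∃ φ : ℍ → CD (n + 1),
      (∀ q : ℍ, φ q =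
        q.re • (1 : CD (n + 1)) + q.imI • a + q.imJ • b + q.imK • (a * b)) ∧
      Function.Injective φ ∧
      φ 1 = 1 ∧
      (∀ p q : ℍ, φ (p * q) = φ p * φ q) ∧
      (∀ p q : ℍ, φ (p + q) = φ p + φ q) ∧
      (∀ (r : ℝ) (p : ℍ), φ (r • p) = r • φ p) ∧
      Set.range φ =
        (Submodule.span ℝ
          ({(1 : CD (n + 1)), a, b, a * b} : Set (CD (n + 1))) : Set (CD (n + 1))) :=
  quaternion_embedding_of_strongly_alternate_general n a b ha hb hna hnb hperp h1 h2
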